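/- arXiv:2402.15488 — 5 statements merged into one kernel-verified Lean document; each statement's English description precedes it below -/
import Mathlib

section
/- Let H be a complex Hilbert space, let f be a nonzero bounded linear operator on H, and let ξ ∈ H be a unit vector satisfying (f ∘ f*) ξ = ‖f‖² ξ. Define ℘(g) = ⟨ξ, g (f* ξ)⟩ / ‖f‖ for bounded operators g on H. Then for every self-adjoint bounded operator k on H and every bounded operator u on H, Re ℘( i(k f − f k) + (u* f − f u*) u + u* (f u − u f) ) ≤ 0. -/
/-!
Write `η = (f†) ξ`, so that `f η = ‖f‖² ξ`. Against the vector `η`, the Hamiltonian part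
`i[k, f]` contributes `i (‖f‖² ⟪ξ, k ξ⟫ - ⟪η, k η⟫)`, which is purely imaginary since `k`
is self-adjoint, and the dissipative part contributes
`2 ⟪u ξ, f (u η)⟫ - ‖u η‖² - ‖f‖² ‖u ξ‖²`, whose real part is at most
`-(‖u η‖ - ‖f‖ ‖u ξ‖)² ≤ 0` by Cauchy–Schwarz.
-/

open ContinuousLinearMap Complex
open scoped InnerProductSpace InnerProduct

section Lindblad

variable {H : Type*} [NormedAddCommGroup H] [InnerProductSpace ℂ H] [CompleteSpace H]
  {f : H →L[ℂ] H} {ξ : H} {c : ℝ}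

lemma inner_commutator_apply_adjoint (heig : f ((f†) ξ) = (c : ℂ) • ξ) (k : H →L[ℂ] H) :
    ⟪ξ, (k * f - f * k) ((f†) ξ)⟫_ℂ = c * ⟪ξ, k ξ⟫_ℂ - ⟪(f†) ξ, k ((f†) ξ)⟫_ℂ := by
  rw [sub_apply, mul_apply_eq_comp, mul_apply_eq_comp, heig, map_smul, inner_sub_right,
    inner_smul_right, ← adjoint_inner_left f (k _) ξ]

lemma re_inner_I_smul_commutator_apply_adjoint (heig : f ((f†) ξ) = (c : ℂ) • ξ)
    {k : H →L[ℂ] H} (hk : IsSelfAdjoint k) :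
    (⟪ξ, (I • (k * f - f * k)) ((f†) ξ)⟫_ℂ).re = 0 := by
  have hreal (x : H) : (⟪x, k x⟫_ℂ).im = 0 := hk.isSymmetric.im_inner_self_apply x
  rw [smul_apply, inner_smul_right, inner_commutator_apply_adjoint heig]
  simp [hreal]

lemma inner_dissipator_apply_adjoint (heig : f ((f†) ξ) = (c : ℂ) • ξ) (u : H →L[ℂ] H) :
    ⟪ξ, ((u† * f - f * u†) * u + u† * (f * u - u * f)) ((f†) ξ)⟫_ℂ
      = 2 * ⟪u ξ, f (u ((f†) ξ))⟫_ℂ - ((‖u ((f†) ξ)‖ ^ 2 : ℝ) : ℂ)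
        - c * ((‖u ξ‖ ^ 2 : ℝ) : ℂ) := by
  have hη : ⟪ξ, f ((u†) (u ((f†) ξ)))⟫_ℂ = ((‖u ((f†) ξ)‖ ^ 2 : ℝ) : ℂ) := by
    rw [← adjoint_inner_left, adjoint_inner_right, inner_self_eq_norm_sq_to_K]
    norm_cast
  have hξ : ⟪u ξ, u ξ⟫_ℂ = ((‖u ξ‖ ^ 2 : ℝ) : ℂ) := by
    rw [inner_self_eq_norm_sq_to_K]
    norm_cast
  simp only [add_apply, sub_apply, mul_apply_eq_comp, heig, map_smul, inner_add_right,
    inner_sub_right, inner_smul_right, adjoint_inner_right, hη, hξ]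
  ring

lemma re_inner_dissipator_apply_adjoint_nonpos
    (heig : f ((f†) ξ) = ((‖f‖ ^ 2 : ℝ) : ℂ) • ξ) (u : H →L[ℂ] H) :
    (⟪ξ, ((u† * f - f * u†) * u + u† * (f * u - u * f)) ((f†) ξ)⟫_ℂ).re ≤ 0 := by
  have hcs : (⟪u ξ, f (u ((f†) ξ))⟫_ℂ).re ≤ ‖u ξ‖ * (‖f‖ * ‖u ((f†) ξ)‖) :=
    (re_inner_le_norm (𝕜 := ℂ) _ _).trans
      (mul_le_mul_of_nonneg_left (f.le_opNorm _) (norm_nonneg _))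
  rw [inner_dissipator_apply_adjoint heig]
  simp only [sub_re, mul_re, ofReal_re, ofReal_im, re_ofNat, im_ofNat, zero_mul, sub_zero]
  nlinarith [sq_nonneg (‖u ((f†) ξ)‖ - ‖f‖ * ‖u ξ‖)]

end Lindblad

theorem norming_functional_dissipative_general
    {H : Type*} [NormedAddCommGroup H] [InnerProductSpace ℂ H] [CompleteSpace H]
    (f : H →L[ℂ] H) (ξ : H)
    (heig : f (ContinuousLinearMap.adjoint f ξ) = ((‖f‖ ^ 2 : ℝ) : ℂ) • ξ)
    (℘ : (H →L[ℂ] H) → ℂ)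
    (h℘ : ∀ g : H →L[ℂ] H,
      ℘ g = (inner ℂ ξ (g (ContinuousLinearMap.adjoint f ξ)) : ℂ) / (‖f‖ : ℂ))
    (k : H →L[ℂ] H) (hk : ContinuousLinearMap.adjoint k = k) (u : H →L[ℂ] H) :
    (℘ (Complex.I • (k * f - f * k)
        + (ContinuousLinearMap.adjoint u * f - f * ContinuousLinearMap.adjoint u) * u
        + ContinuousLinearMap.adjoint u * (f * u - u * f))).re ≤ 0 := by
  rw [h℘, div_ofReal_re, add_assoc, add_apply, inner_add_right, add_re,
    re_inner_I_smul_commutator_apply_adjoint heig (isSelfAdjoint_iff'.mpr hk), zero_add]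
  exact div_nonpos_of_nonpos_of_nonneg (re_inner_dissipator_apply_adjoint_nonpos heig u)
    (norm_nonneg f)

/-- The key dissipativity estimate showing that the negative of a one-term Lindblad
generator `f ↦ i[k,f] + [u*,f]u + u*[f,u]` is accretive: the norming functional
`℘ g = ⟨ξ, g (f* ξ)⟩ / ‖f‖` satisfies `Re ℘(i[k,f] + [u*,f]u + u*[f,u]) ≤ 0` for every
self-adjoint `k` and every bounded operator `u`. -/
theorem norming_functional_dissipative
    {H : Type*} [NormedAddCommGroup H] [InnerProductSpace ℂ H] [CompleteSpace H]
    (f : H →L[ℂ] H) (hf : f ≠ 0) (ξ : H) (hξ : ‖ξ‖ = 1)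
    (heig : f (ContinuousLinearMap.adjoint f ξ) = ((‖f‖ ^ 2 : ℝ) : ℂ) • ξ)
    (℘ : (H →L[ℂ] H) → ℂ)
    (h℘ : ∀ g : H →L[ℂ] H,
      ℘ g = (inner ℂ ξ (g (ContinuousLinearMap.adjoint f ξ)) : ℂ) / (‖f‖ : ℂ))
    (k : H →L[ℂ] H) (hk : ContinuousLinearMap.adjoint k = k) (u : H →L[ℂ] H) :
    (℘ (Complex.I • (k * f - f * k)
        + (ContinuousLinearMap.adjoint u * f - f * ContinuousLinearMap.adjoint u) * u
        + ContinuousLinearMap.adjoint u * (f * u - u * f))).re ≤ 0 :=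
  norming_functional_dissipative_general f ξ heig ℘ h℘ k hk u
end

section
/- For every x ∈ Λ, every h ∈ {0,…,N}, and every f ∈ V, one has E_{x,h}(𝓛₀ f) − 𝓛₀(E_{x,h} f) = −λ_h · E_{x,h} f. -/
/-!
`E_{x,h}` only sees the `x`-th factor, so it commutes with every `L₀^{(z)}`, `z ≠ x`, and the
commutator with `𝓛₀` reduces to `(P_h L₀ − L₀ P_h)^{(x)}`. On a single site,
`P_h L₀ = −λ_h P_h` because `L₀` is diagonal in the basis `e`, and `L₀ P_h = 0` because `P_h`
maps into the `λ_0 = 0` eigenline spanned by `e_0`.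
-/

open scoped TensorProduct

/-- The linear map on `⨂[ℂ] x : Λ, A` applying `φ` in the `x`-th tensor factor and
the identity in all other factors. -/
noncomputable def applyAt {Λ : Type*} [DecidableEq Λ] {A : Type*}
    [AddCommMonoid A] [Module ℂ A] (x : Λ) (φ : A →ₗ[ℂ] A) :
    (⨂[ℂ] _ : Λ, A) →ₗ[ℂ] (⨂[ℂ] _ : Λ, A) :=
  PiTensorProduct.map (Function.update (fun _ => LinearMap.id) x φ)

open Function

section ApplyAt

variable {Λ : Type*} [DecidableEq Λ] {A : Type*}

section AddCommMonoid

variable [AddCommMonoid A] [Module ℂ A]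

theorem applyAt_eq_mapMultilinear_toLinearMap (x : Λ) (φ : A →ₗ[ℂ] A) :
    applyAt x φ =
      (PiTensorProduct.mapMultilinear ℂ (fun _ : Λ => A) (fun _ => A)).toLinearMap
        (fun _ => LinearMap.id) x φ :=
  rfl

theorem applyAt_smul (x : Λ) (c : ℂ) (φ : A →ₗ[ℂ] A) :
    applyAt x (c • φ) = c • applyAt x φ := by
  simp only [applyAt_eq_mapMultilinear_toLinearMap, map_smul]

theorem applyAt_comp_applyAt (x : Λ) (φ ψ : A →ₗ[ℂ] A) :
    applyAt x φ ∘ₗ applyAt x ψ = applyAt x (φ ∘ₗ ψ) := by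
  rw [applyAt, applyAt, applyAt, ← PiTensorProduct.map_comp]
  congr 1
  ext i g
  by_cases hi : i = x
  · subst hi; simp
  · simp [update_of_ne hi]

theorem applyAt_comp_applyAt_comm {x z : Λ} (hxz : x ≠ z) (φ ψ : A →ₗ[ℂ] A) :
    applyAt x φ ∘ₗ applyAt z ψ = applyAt z ψ ∘ₗ applyAt x φ := by
  rw [applyAt, applyAt, ← PiTensorProduct.map_comp, ← PiTensorProduct.map_comp]
  congr 1
  ext i g
  by_cases hix : i = x
  · subst hix; simp [update_of_ne hxz]
  · by_cases hiz : i = z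
    · subst hiz; simp [update_of_ne hix]
    · simp [update_of_ne hix, update_of_ne hiz]

end AddCommMonoid

variable [AddCommGroup A] [Module ℂ A]

theorem applyAt_sub (x : Λ) (φ ψ : A →ₗ[ℂ] A) :
    applyAt x (φ - ψ) = applyAt x φ - applyAt x ψ := by
  simp only [applyAt_eq_mapMultilinear_toLinearMap, map_sub]

theorem applyAt_comp_sum_sub_sum_comp_applyAt [Fintype Λ] (x : Λ) (φ L : A →ₗ[ℂ] A) :
    applyAt x φ ∘ₗ (∑ z : Λ, applyAt z L) - (∑ z : Λ, applyAt z L) ∘ₗ applyAt x φ =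
      applyAt x (φ ∘ₗ L - L ∘ₗ φ) := by
  simp only [← Module.End.mul_eq_comp, Finset.mul_sum, Finset.sum_mul]
  rw [← Finset.sum_sub_distrib, Finset.sum_eq_single x]
  · simp only [Module.End.mul_eq_comp, applyAt_comp_applyAt, applyAt_sub]
  · intro z _ hzx
    rw [Module.End.mul_eq_comp, Module.End.mul_eq_comp,
      applyAt_comp_applyAt_comm (Ne.symm hzx), sub_self]
  · simp

end ApplyAt

section DiagonalOperator

variable {A : Type*} [NormedAddCommGroup A] [InnerProductSpace ℂ A]
  {ι : Type*} [Fintype ι] {v : ι → A} (hv : Orthonormal ℂ v) (lam : ι → ℝ) {L : A →ₗ[ℂ] A}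
  (hL : ∀ g : A, L g = -∑ i, (lam i : ℂ) • ((inner ℂ (v i) g : ℂ) • v i))
include hv hL

theorem inner_apply_eq_neg_mul_of_orthonormal (i : ι) (g : A) :
    inner ℂ (v i) (L g) = -(lam i : ℂ) * inner ℂ (v i) g := by
  simp only [hL, smul_smul, inner_neg_right, hv.inner_right_fintype, neg_mul]

theorem apply_eq_neg_smul_of_orthonormal (i : ι) : L (v i) = -((lam i : ℂ) • v i) := by
  classical
  simp only [hL, orthonormal_iff_ite.mp hv, ite_smul, one_smul, zero_smul, smul_ite,
    smul_zero, Finset.sum_ite_eq', Finset.mem_univ, if_true]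

end DiagonalOperator

theorem intertwining_qudit_general
    {A : Type*} [NormedAddCommGroup A] [InnerProductSpace ℂ A]
    {N : ℕ} (e : OrthonormalBasis (Fin (N + 1)) ℂ A)
    (lam : Fin (N + 1) → ℝ) (hlam0 : lam 0 = 0)
    {Λ : Type*} [Fintype Λ] [DecidableEq Λ]
    (L0 : A →ₗ[ℂ] A)
    (hL0 : ∀ g : A, L0 g = -∑ h : Fin (N + 1), (lam h : ℂ) • ((inner ℂ (e h) g : ℂ) • e h))
    (P : Fin (N + 1) → (A →ₗ[ℂ] A))
    (hP : ∀ (h : Fin (N + 1)) (g : A), P h g = (inner ℂ (e h) g : ℂ) • e 0)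
    (x : Λ) (h : Fin (N + 1)) (f : ⨂[ℂ] _ : Λ, A) :
    applyAt x (P h) ((∑ z : Λ, applyAt z L0) f)
      - (∑ z : Λ, applyAt z L0) (applyAt x (P h) f)
      = -((lam h : ℂ) • applyAt x (P h) f) := by
  have hPL : P h ∘ₗ L0 = -(lam h : ℂ) • P h := by
    ext g
    simp only [LinearMap.comp_apply, LinearMap.smul_apply, hP, smul_smul,
      inner_apply_eq_neg_mul_of_orthonormal e.orthonormal lam hL0]
  have hLP : L0 ∘ₗ P h = 0 := by
    ext g
    simp [hP, apply_eq_neg_smul_of_orthonormal e.orthonormal lam hL0, hlam0]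
  calc _ = (applyAt x (P h) ∘ₗ (∑ z : Λ, applyAt z L0)
          - (∑ z : Λ, applyAt z L0) ∘ₗ applyAt x (P h)) f := rfl
    _ = -((lam h : ℂ) • applyAt x (P h) f) := by
      rw [applyAt_comp_sum_sub_sum_comp_applyAt, hPL, hLP, sub_zero, applyAt_smul,
        LinearMap.smul_apply, neg_smul]

/-- Intertwining relation between the non-interacting qudit generator
`𝓛₀ = ∑_{x∈Λ} L₀^{(x)}` and the operators `E_{x,h} = (P_h)^{(x)}`:
`E_{x,h} 𝓛₀ f − 𝓛₀ E_{x,h} f = −λ_h E_{x,h} f`. -/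
theorem intertwining_qudit
    {A : Type*} [NormedAddCommGroup A] [InnerProductSpace ℂ A] [FiniteDimensional ℂ A]
    {N : ℕ} (e : OrthonormalBasis (Fin (N + 1)) ℂ A)
    (lam : Fin (N + 1) → ℝ) (hlam0 : lam 0 = 0)
    {Λ : Type*} [Fintype Λ] [DecidableEq Λ]
    (L0 : A →ₗ[ℂ] A)
    (hL0 : ∀ g : A, L0 g = -∑ h : Fin (N + 1), (lam h : ℂ) • ((inner ℂ (e h) g : ℂ) • e h))
    (P : Fin (N + 1) → (A →ₗ[ℂ] A))
    (hP : ∀ (h : Fin (N + 1)) (g : A), P h g = (inner ℂ (e h) g : ℂ) • e 0)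
    (x : Λ) (h : Fin (N + 1)) (f : ⨂[ℂ] _ : Λ, A) :
    applyAt x (P h) ((∑ z : Λ, applyAt z L0) f)
      - (∑ z : Λ, applyAt z L0) (applyAt x (P h) f)
      = -((lam h : ℂ) • applyAt x (P h) f) :=
  intertwining_qudit_general e lam hlam0 L0 hL0 P hP x h f
end

section
/- Let ι be a type and let T be a bounded linear operator on ℓ¹(ι) which is positivity-preserving, i.e. if β ∈ ℓ¹(ι) satisfies β(x) ≥ 0 for all x then (Tβ)(x) ≥ 0 for all x. Let M ≥ ‖T‖ and let c > M be a real number. Suppose f, g ∈ ℓ¹(ι) satisfy f(x) ≥ 0 and g(x) ≥ 0 for all x, and c·g(x) ≤ f(x) + (Tg)(x) for every x ∈ ι. Then ‖g‖₁ ≤ ‖f‖₁ / (c − M). -/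
/-- The iteration argument underlying the a priori bound on the resolvent equation:
if `T` is a positivity-preserving bounded operator on `ℓ¹(ι)`, `‖T‖ ≤ M < c`, and the
nonnegative elements `f, g ∈ ℓ¹(ι)` satisfy `c g ≤ f + T g` pointwise, then
`‖g‖₁ ≤ ‖f‖₁ / (c − M)`. -/
theorem resolvent_apriori_bound
    {ι : Type*}
    (T : lp (fun _ : ι => ℝ) 1 →L[ℝ] lp (fun _ : ι => ℝ) 1)
    (hTpos : ∀ β : lp (fun _ : ι => ℝ) 1, (∀ x, 0 ≤ β x) → ∀ x, 0 ≤ (T β) x)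
    (M : ℝ) (hM : ‖T‖ ≤ M) (c : ℝ) (hc : M < c)
    (f g : lp (fun _ : ι => ℝ) 1)
    (hf : ∀ x, 0 ≤ f x) (hg : ∀ x, 0 ≤ g x)
    (hineq : ∀ x, c * g x ≤ f x + (T g) x) :
    ‖g‖ ≤ ‖f‖ / (c - M) := by
  have hp : (0:ℝ) < (1 : ENNReal).toReal := by norm_num
  have hTg : ∀ x, 0 ≤ (T g) x := hTpos g hg
  -- summability
  have sg : Summable fun x => ‖g x‖ := by
    simpa using (lp.memℓp g).summable hp
  have sf : Summable fun x => ‖f x‖ := by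
    simpa using (lp.memℓp f).summable hp
  have sTg : Summable fun x => ‖(T g) x‖ := by
    simpa using (lp.memℓp (T g)).summable hp
  have ng : ‖g‖ = ∑' x, g x := by
    rw [lp.norm_eq_tsum_rpow hp]
    simp [abs_of_nonneg (hg _)]
  have nf : ‖f‖ = ∑' x, f x := by
    rw [lp.norm_eq_tsum_rpow hp]
    simp [abs_of_nonneg (hf _)]
  have nTg : ‖T g‖ = ∑' x, (T g) x := by
    rw [lp.norm_eq_tsum_rpow hp]
    simp [abs_of_nonneg (hTg _)]
  have sg' : Summable fun x => g x := by
    simpa [abs_of_nonneg (hg _)] using sg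
  have sf' : Summable fun x => f x := by
    simpa [abs_of_nonneg (hf _)] using sf
  have sTg' : Summable fun x => (T g) x := by
    simpa [abs_of_nonneg (hTg _)] using sTg
  have key : c * ‖g‖ ≤ ‖f‖ + M * ‖g‖ := by
    have h1 : c * ‖g‖ = ∑' x, c * g x := by rw [ng, tsum_mul_left]
    have h2 : (∑' x, c * g x) ≤ ∑' x, (f x + (T g) x) :=
      Summable.tsum_le_tsum hineq (sg'.mul_left c) (sf'.add sTg')
    have h3 : (∑' x, (f x + (T g) x)) = ‖f‖ + ‖T g‖ := by
      rw [Summable.tsum_add sf' sTg', nf, nTg]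
    have h4 : ‖T g‖ ≤ M * ‖g‖ :=
      (T.le_opNorm g).trans (mul_le_mul_of_nonneg_right hM (norm_nonneg g))
    linarith
  have hc0 : (0:ℝ) < c - M := by linarith
  rw [le_div_iff₀ hc0]
  linarith
end

section
/- Let X and Y be disjoint subsets of ι. Then every element u of the star-subalgebra of B(ℋ) generated by {v_x : x ∈ X} commutes with every element f of the star-subalgebra of B(ℋ) generated by {a_y : y ∈ Y}: u f = f u. -/
/-- The fermionic Fock space over the lattice `ι`: the Hilbert space `ℓ²` of
square-summable complex families indexed by the finite subsets of `ι`. -/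
noncomputable abbrev FockSpace (ι : Type*) := lp (fun _ : Finset ι => ℂ) 2

/-- The canonical orthonormal basis vector `e_X` of the Fock space. -/
noncomputable def fockBasis {ι : Type*} [DecidableEq ι] (X : Finset ι) : FockSpace ι :=
  lp.single 2 X (1 : ℂ)

/-!
For `x ≠ y` the annihilation operator `a_x` anticommutes with `a_y` and with the creation
operator `a_y^*`: the two orders differ only in whether `y` is counted in the Jordan–Wigner sign
of `x` or vice versa, and exactly one of `x < y`, `y < x` holds. The parity `w` anticommutes with
every `a_y` and `a_y^*`, since these change `|X|` by one. So `v_x = w a_x`, a product of two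
operators each anticommuting with `a_y` (and with `a_y^*`), commutes with `a_y` and `a_y^*`.
A star-subalgebra lies in the double commutant of its generators, which carries the commutation
over to the generated star-subalgebras.
-/

namespace StarAlgebra

variable {R A : Type*} [CommSemiring R] [StarRing R] [Semiring A] [StarRing A] [Algebra R A]
  [StarModule R A]

lemma commute_of_mem_adjoin_of_forall_mem_commute {a b : A} {s : Set A}
    (hb : b ∈ adjoin R s) (h : ∀ b ∈ s, Commute a b) (h_star : ∀ b ∈ s, Commute a (star b)) :
    Commute a b := by
  have ha : a ∈ StarSubalgebra.centralizer R s :=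
    StarSubalgebra.mem_centralizer_iff R |>.2 fun g hg => ⟨(h g hg).symm.eq, (h_star g hg).symm.eq⟩
  exact ((StarSubalgebra.mem_centralizer_iff R).1 (adjoin_le_centralizer_centralizer R s hb) a ha).1

lemma commute_of_mem_adjoin_of_mem_adjoin {s t : Set A} {u f : A}
    (hu : u ∈ adjoin R s) (hf : f ∈ adjoin R t) (h : ∀ x ∈ s, ∀ y ∈ t, Commute x y)
    (h_star : ∀ x ∈ s, ∀ y ∈ t, Commute x (star y)) : Commute u f := by
  refine commute_of_mem_adjoin_of_forall_mem_commute hf (fun y hy => ?_) fun y hy => ?_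
  · refine (commute_of_mem_adjoin_of_forall_mem_commute hu (fun x hx => ?_) fun x hx => ?_).symm
    · exact (h x hx y hy).symm
    · simpa only [star_star] using (h_star x hx y hy).star_star.symm
  · refine (commute_of_mem_adjoin_of_forall_mem_commute hu (fun x hx => ?_) fun x hx => ?_).symm
    · exact (h_star x hx y hy).symm
    · exact (h x hx y hy).star_star.symm

end StarAlgebra

lemma commute_mul_of_anticommute {R : Type*} [Ring R] {p q b : R} (hp : p * b = -(b * p))
    (hq : q * b = -(b * q)) : Commute (p * q) b :=
  calc p * q * b = -(p * b * q) := by rw [mul_assoc, hq, mul_neg, mul_assoc]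
    _ = b * (p * q) := by rw [hp, neg_mul, neg_neg, mul_assoc]

section

variable {ι : Type*} [DecidableEq ι]

lemma fockBasis_apply (Z W : Finset ι) :
    (fockBasis Z : ∀ _ : Finset ι, ℂ) W = if W = Z then 1 else 0 := by
  simp [fockBasis, Pi.single_apply]

lemma FockSpace.ext_fockBasis {E : Type*} [AddCommMonoid E] [Module ℂ E] [TopologicalSpace E]
    [T2Space E] {T S : FockSpace ι →L[ℂ] E}
    (h : ∀ Z : Finset ι, T (fockBasis Z) = S (fockBasis Z)) : T = S :=
  lp.ext_continuousLinearMap ENNReal.ofNat_ne_top fun Z => ContinuousLinearMap.ext_ring (h Z)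

lemma inner_fockBasis_left (Z : Finset ι) (v : FockSpace ι) :
    inner ℂ (fockBasis Z) v = (v : ∀ _ : Finset ι, ℂ) Z := by
  simp [fockBasis, lp.inner_single_left]

open ComplexConjugate in
lemma star_apply_fockBasis_apply (T : FockSpace ι →L[ℂ] FockSpace ι) (Z W : Finset ι) :
    (star T (fockBasis Z) : ∀ _ : Finset ι, ℂ) W =
      conj ((T (fockBasis W) : ∀ _ : Finset ι, ℂ) Z) := by
  rw [← inner_fockBasis_left, ContinuousLinearMap.star_eq_adjoint,
    ContinuousLinearMap.adjoint_inner_right, ← inner_conj_symm, inner_fockBasis_left]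

def IsFockParity (w : FockSpace ι →L[ℂ] FockSpace ι) : Prop :=
  ∀ X : Finset ι, w (fockBasis X) = ((-1 : ℂ) ^ X.card) • fockBasis X

end

section

variable {ι : Type*} [LinearOrder ι]

lemma neg_one_pow_card_filter_lt_erase (x : ι) {y : ι} {Z : Finset ι} (hy : y ∈ Z) :
    (-1 : ℂ) ^ ((Z.erase y).filter (· < x)).card =
      (if y < x then -1 else 1) * (-1) ^ (Z.filter (· < x)).card := by
  rw [Finset.filter_erase]
  split_ifs with hyx
  · rw [← Finset.card_erase_add_one (Finset.mem_filter.2 ⟨hy, hyx⟩), pow_succ]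
    ring
  · rw [Finset.erase_eq_of_notMem (by simp [hyx]), one_mul]

lemma neg_one_pow_card_filter_lt_insert (x : ι) {y : ι} {Z : Finset ι} (hy : y ∉ Z) :
    (-1 : ℂ) ^ ((insert y Z).filter (· < x)).card =
      (if y < x then -1 else 1) * (-1) ^ (Z.filter (· < x)).card := by
  have h := neg_one_pow_card_filter_lt_erase x (Finset.mem_insert_self y Z)
  rw [Finset.erase_insert hy] at h
  rw [h]
  split_ifs <;> ring

def IsFockAnnihilation (a : ι → (FockSpace ι →L[ℂ] FockSpace ι)) : Prop :=
  ∀ (x : ι) (X : Finset ι), a x (fockBasis X) =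
    if x ∈ X then ((-1 : ℂ) ^ (X.filter (fun y => y < x)).card) • fockBasis (X.erase x) else 0

namespace IsFockAnnihilation

variable {a : ι → (FockSpace ι →L[ℂ] FockSpace ι)} (ha : IsFockAnnihilation a)
include ha

lemma star_apply (x : ι) (Z : Finset ι) :
    star (a x) (fockBasis Z) =
      if x ∈ Z then 0 else ((-1 : ℂ) ^ (Z.filter (· < x)).card) • fockBasis (insert x Z) := by
  ext W
  rw [star_apply_fockBasis_apply, ha]
  by_cases hW : x ∈ W ∧ Z = W.erase x
  · obtain ⟨hxW, rfl⟩ := hW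
    have : (W.erase x).filter (· < x) = W.filter (· < x) := by
      rw [Finset.filter_erase, Finset.erase_eq_of_notMem (by simp)]
    simp [hxW, fockBasis_apply, this]
  · have hW' : x ∉ Z → W ≠ insert x Z := by
      rintro hxZ rfl
      exact hW ⟨Finset.mem_insert_self x Z, (Finset.erase_insert hxZ).symm⟩
    split_ifs <;> simp_all [fockBasis_apply]

lemma mul_anticomm {x y : ι} (hxy : x ≠ y) : a x * a y = -(a y * a x) := by
  refine FockSpace.ext_fockBasis fun Z => ?_
  simp only [mul_apply_eq_comp, neg_apply]
  by_cases hx : x ∈ Z <;> by_cases hy : y ∈ Z <;>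
    simp [ha _ _, hx, hy, hxy, hxy.symm, smul_smul, Finset.erase_right_comm (s := Z) (a := x),
      neg_one_pow_card_filter_lt_erase x, neg_one_pow_card_filter_lt_erase y]
  rcases hxy.lt_or_gt with h | h <;> simp [h, h.not_gt, mul_comm]

lemma mul_star_anticomm {x y : ι} (hxy : x ≠ y) : a x * star (a y) = -(star (a y) * a x) := by
  refine FockSpace.ext_fockBasis fun Z => ?_
  simp only [mul_apply_eq_comp, neg_apply]
  by_cases hx : x ∈ Z <;> by_cases hy : y ∈ Z <;>
    simp [ha _ _, ha.star_apply, hx, hy, hxy, hxy.symm, smul_smul,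
      Finset.erase_insert_of_ne hxy.symm, neg_one_pow_card_filter_lt_insert x,
      neg_one_pow_card_filter_lt_erase y]
  rcases hxy.lt_or_gt with h | h <;> simp [h, h.not_gt, mul_comm]

end IsFockAnnihilation

namespace IsFockParity

variable {w : FockSpace ι →L[ℂ] FockSpace ι} (hw : IsFockParity w)
  {a : ι → (FockSpace ι →L[ℂ] FockSpace ι)} (ha : IsFockAnnihilation a)
include hw ha

lemma mul_anticomm (y : ι) : w * a y = -(a y * w) := by
  refine FockSpace.ext_fockBasis fun Z => ?_
  simp only [mul_apply_eq_comp, neg_apply]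
  by_cases hy : y ∈ Z
  · have hcard : (-1 : ℂ) ^ Z.card = -(-1) ^ (Z.erase y).card := by
      rw [← Finset.card_erase_add_one hy, pow_succ, mul_neg_one]
    simp [ha _ _, hw _, hy, hcard, smul_smul, mul_comm]
  · simp [ha _ _, hw _, hy]

lemma mul_star_anticomm (y : ι) : w * star (a y) = -(star (a y) * w) := by
  refine FockSpace.ext_fockBasis fun Z => ?_
  simp only [mul_apply_eq_comp, neg_apply]
  by_cases hy : y ∈ Z
  · simp [ha.star_apply, hw _, hy]
  · simp [ha.star_apply, hw _, hy, smul_smul, Finset.card_insert_of_notMem hy, pow_succ,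
      mul_comm]

end IsFockParity

end

/-- If `X` and `Y` are disjoint subsets of the lattice, every element of the
star-subalgebra generated by `{v_x := w a_x : x ∈ X}` commutes with every element of the
star-subalgebra generated by `{a_y : y ∈ Y}`. -/
theorem v_algebra_commutes_with_a_algebra {ι : Type*} [LinearOrder ι]
    (a : ι → (FockSpace ι →L[ℂ] FockSpace ι))
    (ha : ∀ (x : ι) (X : Finset ι),
      a x (fockBasis X) =
        if x ∈ X then
          ((-1 : ℂ) ^ (X.filter (fun y => y < x)).card) • fockBasis (X.erase x)
        else 0)
    (w : FockSpace ι →L[ℂ] FockSpace ι)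
    (hw : ∀ X : Finset ι, w (fockBasis X) = ((-1 : ℂ) ^ X.card) • fockBasis X)
    (X Y : Set ι) (hXY : Disjoint X Y)
    (u f : FockSpace ι →L[ℂ] FockSpace ι)
    (hu : u ∈ StarAlgebra.adjoin ℂ ((fun x => w * a x) '' X))
    (hf : f ∈ StarAlgebra.adjoin ℂ (a '' Y)) :
    u * f = f * u := by
  have ha : IsFockAnnihilation a := ha
  have hw : IsFockParity w := hw
  have hne : ∀ x ∈ X, ∀ y ∈ Y, x ≠ y := fun x hx y hy h => Set.disjoint_left.1 hXY hx (h ▸ hy)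
  refine (StarAlgebra.commute_of_mem_adjoin_of_mem_adjoin hu hf ?_ ?_).eq
  · refine Set.forall_mem_image.2 fun x hx => Set.forall_mem_image.2 fun y hy => ?_
    exact commute_mul_of_anticommute (hw.mul_anticomm ha y) (ha.mul_anticomm (hne x hx y hy))
  · refine Set.forall_mem_image.2 fun x hx => Set.forall_mem_image.2 fun y hy => ?_
    exact commute_mul_of_anticommute (hw.mul_star_anticomm ha y)
      (ha.mul_star_anticomm (hne x hx y hy))
end

section
/- The one-site Fermi Ornstein–Uhlenbeck generator L⁰ is symmetric with respect to the GNS inner product induced by the free-fermion state: with ρ_h = diag(1, e^h) / (1 + e^h), one has tr( ρ_h (L⁰ x)* y ) = tr( ρ_h x* (L⁰ y) ) for all x, y ∈ M₂(ℂ). -/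
open Matrix

/-!
Write `D_a f = [a, f] a* + a [f, a*] = 2 a f a* - {a a*, f}`, so that
`L⁰ = e^{h/2} D_v + e^{-h/2} D_{v*}`. The state satisfies `ρ v = e^{-h} v ρ`, i.e. `v` is an
eigenvector of the modular map `x ↦ ρ x ρ⁻¹`. Hence `ρ` commutes with `v v*` and `v* v`, which
makes the anticommutator parts of `L⁰` symmetric for `⟨x, y⟩_ρ = tr (ρ x* y)`, while trace
cyclicity moves the jump part `v f v*` of `D_v` to `e^{-h}` times the jump part `v* f v` of
`D_{v*}` and back. The detailed-balance weights `e^{±h/2}` are exactly those for which the two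
jump contributions cancel.
-/

namespace Matrix

variable {n K : Type*} [Fintype n] [CommRing K] [StarRing K]

def gnsInner (ρ x y : Matrix n n K) : K := (ρ * star x * y).trace

def dissipator (a f : Matrix n n K) : Matrix n n K :=
  (a * f - f * a) * star a + a * (f * star a - star a * f)

section Sesquilinear

variable (ρ : Matrix n n K)

lemma gnsInner_add_left (x x' y : Matrix n n K) :
    gnsInner ρ (x + x') y = gnsInner ρ x y + gnsInner ρ x' y := by
  simp only [gnsInner, star_add, mul_add, add_mul, trace_add]

lemma gnsInner_smul_left (c : K) (x y : Matrix n n K) :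
    gnsInner ρ (c • x) y = star c * gnsInner ρ x y := by
  simp only [gnsInner, star_smul, Matrix.mul_smul, Matrix.smul_mul, trace_smul, smul_eq_mul]

lemma gnsInner_add_right (x y y' : Matrix n n K) :
    gnsInner ρ x (y + y') = gnsInner ρ x y + gnsInner ρ x y' := by
  simp only [gnsInner, mul_add, trace_add]

lemma gnsInner_smul_right (c : K) (x y : Matrix n n K) :
    gnsInner ρ x (c • y) = c * gnsInner ρ x y := by
  simp only [gnsInner, Matrix.mul_smul, trace_smul, smul_eq_mul]

end Sesquilinear

lemma gnsInner_dissipator_sub {ρ a : Matrix n n K} (hρa : Commute ρ (a * star a))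
    (x y : Matrix n n K) :
    gnsInner ρ (dissipator a x) y - gnsInner ρ x (dissipator a y) =
      2 * ((ρ * a * star x * star a * y).trace - (star a * ρ * star x * a * y).trace) := by
  have hjump : (ρ * star x * a * y * star a).trace = (star a * ρ * star x * a * y).trace := by
    rw [trace_mul_comm]
    simp only [Matrix.mul_assoc]
  have hanti : (ρ * star x * y * (a * star a)).trace = (ρ * (a * star a) * star x * y).trace := by
    rw [trace_mul_comm, ← Matrix.mul_assoc, ← Matrix.mul_assoc, ← hρa.eq]
  have expand : ρ * star (dissipator a x) * y - ρ * star x * dissipator a y =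
      (ρ * a * star x * star a * y - ρ * star x * a * y * star a)
        + (ρ * a * star x * star a * y - ρ * star x * a * y * star a)
        - ρ * (a * star a) * star x * y + ρ * star x * y * (a * star a) := by
    simp only [dissipator, star_add, star_sub, star_mul, star_star]
    noncomm_ring
  rw [gnsInner, gnsInner, ← trace_sub, expand]
  simp only [trace_add, trace_sub, hjump, hanti]
  ring

section ModularEigenvector

variable {ρ a : Matrix n n K} {μ : K}

lemma star_mul_eq_smul_mul_star (hρ : IsSelfAdjoint ρ) (hμ : IsSelfAdjoint μ)
    (hρa : ρ * a = μ • (a * ρ)) : star a * ρ = μ • (ρ * star a) := by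
  simpa only [star_mul, star_smul, hρ.star_eq, hμ.star_eq] using congrArg star hρa

lemma commute_mul_star (hρ : IsSelfAdjoint ρ) (hμ : IsSelfAdjoint μ)
    (hρa : ρ * a = μ • (a * ρ)) : Commute ρ (a * star a) :=
  calc ρ * (a * star a) = μ • (a * (ρ * star a)) := by
        rw [← Matrix.mul_assoc, hρa, Matrix.smul_mul, Matrix.mul_assoc]
    _ = a * star a * ρ := by
        rw [Matrix.mul_assoc, star_mul_eq_smul_mul_star hρ hμ hρa, Matrix.mul_smul]

variable [IsDomain K]

lemma commute_star_mul (hρ : IsSelfAdjoint ρ) (hμ : IsSelfAdjoint μ) (hμ₀ : μ ≠ 0)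
    (hρa : ρ * a = μ • (a * ρ)) : Commute ρ (star a * a) := by
  refine smul_right_injective _ hμ₀ ?_
  calc μ • (ρ * (star a * a)) = star a * (ρ * a) := by
        rw [← Matrix.mul_assoc, ← Matrix.smul_mul, ← star_mul_eq_smul_mul_star hρ hμ hρa,
          Matrix.mul_assoc]
    _ = μ • (star a * a * ρ) := by
        rw [hρa, Matrix.mul_smul, Matrix.mul_assoc]

theorem gnsInner_dissipator_symm (hρ : IsSelfAdjoint ρ) (hμ : IsSelfAdjoint μ) (hμ₀ : μ ≠ 0)
    (hρa : ρ * a = μ • (a * ρ)) {c : K} (hc : IsSelfAdjoint c) (x y : Matrix n n K) :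
    gnsInner ρ (c • dissipator a x + (c * μ) • dissipator (star a) x) y =
      gnsInner ρ x (c • dissipator a y + (c * μ) • dissipator (star a) y) := by
  have hD := gnsInner_dissipator_sub (commute_mul_star hρ hμ hρa) x y
  have hD' := gnsInner_dissipator_sub (a := star a)
    (by simpa only [star_star] using commute_star_mul hρ hμ hμ₀ hρa) x y
  simp only [star_star] at hD'
  have hjump : (star a * ρ * star x * a * y).trace = μ * (ρ * star a * star x * a * y).trace := by
    rw [star_mul_eq_smul_mul_star hρ hμ hρa]
    simp only [Matrix.smul_mul, trace_smul, smul_eq_mul]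
  have hjump' : (ρ * a * star x * star a * y).trace = μ * (a * ρ * star x * star a * y).trace := by
    rw [hρa]
    simp only [Matrix.smul_mul, trace_smul, smul_eq_mul]
  simp only [gnsInner_add_left, gnsInner_smul_left, gnsInner_add_right, gnsInner_smul_right,
    star_mul', hc.star_eq, hμ.star_eq]
  linear_combination c * hD + c * μ * hD' - 2 * c * hjump + 2 * c * hjump'

end ModularEigenvector

end Matrix

/-- The one-site Fermi Ornstein–Uhlenbeck generator
`L⁰ f = e^{h/2}([v,f]v* + v[f,v*]) + e^{−h/2}([v*,f]v + v*[f,v])`, `v = [[0,1],[0,0]]`,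
is symmetric with respect to the GNS inner product induced by the free-fermion state
`ρ_h = diag(1, e^h)/(1 + e^h)`: `tr(ρ_h (L⁰ x)* y) = tr(ρ_h x* (L⁰ y))`. -/
theorem fermiOU_onesite_symmetric_GNS
    (h : ℝ) (v ρ : Matrix (Fin 2) (Fin 2) ℂ)
    (hv : v = !![0, 1; 0, 0])
    (hρ : ρ = ((1 + Real.exp h : ℝ) : ℂ)⁻¹ • !![1, 0; 0, ((Real.exp h : ℝ) : ℂ)])
    (L0 : Matrix (Fin 2) (Fin 2) ℂ → Matrix (Fin 2) (Fin 2) ℂ)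
    (hL0 : ∀ f,
      L0 f =
        ((Real.exp (h / 2) : ℝ) : ℂ) •
            ((v * f - f * v) * star v + v * (f * star v - star v * f))
        + ((Real.exp (-h / 2) : ℝ) : ℂ) •
            ((star v * f - f * star v) * v + star v * (f * v - v * f))) :
    ∀ x y : Matrix (Fin 2) (Fin 2) ℂ,
      (ρ * star (L0 x) * y).trace = (ρ * star x * L0 y).trace := by
  have hL : ∀ f, L0 f = ((Real.exp (h / 2) : ℝ) : ℂ) • dissipator v f
      + (((Real.exp (h / 2) : ℝ) : ℂ) * ((Real.exp (-h) : ℝ) : ℂ)) • dissipator (star v) f := by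
    have hweight : Real.exp (-h / 2) = Real.exp (h / 2) * Real.exp (-h) := by
      rw [← Real.exp_add]; ring_nf
    intro f
    rw [hL0, hweight, Complex.ofReal_mul, dissipator, dissipator, star_star]
  have hρ_sa : IsSelfAdjoint ρ := by
    subst hρ
    ext i j; fin_cases i <;> fin_cases j <;> simp [star_apply, -Complex.ofReal_exp]
  have hρv : ρ * v = ((Real.exp (-h) : ℝ) : ℂ) • (v * ρ) := by
    have hexp : ((Real.exp (-h) : ℝ) : ℂ) * ((Real.exp h : ℝ) : ℂ) = 1 := by
      rw [← Complex.ofReal_mul, ← Real.exp_add, neg_add_cancel, Real.exp_zero, Complex.ofReal_one]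
    subst hρ hv
    ext i j; fin_cases i <;> fin_cases j <;> simp [-Complex.ofReal_exp, mul_left_comm, hexp]
  intro x y
  simpa only [gnsInner, hL] using
    gnsInner_dissipator_symm hρ_sa (Complex.conj_ofReal _)
      (Complex.ofReal_ne_zero.mpr (Real.exp_ne_zero _)) hρv (Complex.conj_ofReal _) x y
end
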